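/- Fix an integer n ≥ 1 and a real β ≥ n, and define A_β = ⋃_{m=1}^{∞} ⋃_{j=1}^{2^{⌊mβ⌋}} P_{mj} ⊂ ℝ^{n+1}, where P_{mj} = {y_{mj}} × [0, 2^{−m}]^n with y_{mj} = 2^{−m} + j·2^{−m−⌊mβ⌋}. Then there exists a constant c > 0 such that for every integer k ≥ 1, every cover of A_β by sets of diameter at most 2^{−k} has at least c·2^{(n+1)kβ/(β+1)} members. -/

import Mathlib

open MeasureTheory Set

/-- The spacing `a_m = 2^{-m-⌊mβ⌋}` of the construction. -/
noncomputable def fractalSpacing (β : ℝ) (m : ℕ) : ℝ :=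
  (2 : ℝ) ^ (-(m : ℝ) - (⌊(m : ℝ) * β⌋ : ℝ))

/-- The right endpoints `y_{mj} = 2^{-m} + j·a_m`. -/
noncomputable def fractalPoint (β : ℝ) (m j : ℕ) : ℝ :=
  (2 : ℝ) ^ (-(m : ℝ)) + (j : ℝ) * fractalSpacing β m

/-- The `n`-dimensional plaque `P_{mj} = {y_{mj}} × [0,2^{-m}]^n`. -/
noncomputable def fractalPlaque (n : ℕ) (β : ℝ) (m j : ℕ) :
    Set (EuclideanSpace ℝ (Fin (n + 1))) :=
  {x | x 0 = fractalPoint β m j ∧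
       ∀ i : Fin (n + 1), i ≠ 0 → x i ∈ Icc (0 : ℝ) ((2 : ℝ) ^ (-(m : ℝ)))}

/-- The set `A_β = ⋃_{m≥1} ⋃_{j=1}^{2^{⌊mβ⌋}} P_{mj}`. -/
noncomputable def fractalPlaqueUnion (n : ℕ) (β : ℝ) :
    Set (EuclideanSpace ℝ (Fin (n + 1))) :=
  ⋃ (m : ℕ) (_ : 1 ≤ m) (j : ℕ) (_ : 1 ≤ j) (_ : j ≤ 2 ^ (⌊(m : ℝ) * β⌋.toNat)),
    fractalPlaque n β m j

/-!
For `m ≥ 1` and `t ≥ ⌊mβ⌋` consecutive plaques `P_{mj}` are at least `2^{-(m+t)}` apart, so the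
points of `P_{m1} ∪ ⋯ ∪ P_{m,2^{⌊mβ⌋}}` lying on the grid of mesh `2^{-(m+t)}` are `2^{⌊mβ⌋ + tn}`
points at mutual distance `> 2^{-k}` for `k = m + t + 1`; a cover by sets of diameter `≤ 2^{-k}`
needs a different set for each of them. Choosing `m = ⌊(k-1)/(β+1)⌋` and `t = k - 1 - m` makes the
exponent `⌊mβ⌋ + tn` at least `(n+1)kβ/(β+1) - (n+1)(β+2)`. When `k` is too small for `m ≥ 1`, that
bound is `≤ 0` and a single member of the cover suffices.
-/

open scoped ENNReal

theorem Metric.IsSeparated.card_le_card_of_subset_sUnion {X : Type*} [PseudoEMetricSpace X]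
    {ε : ℝ≥0∞} {s : Finset X} {F : Finset (Set X)} (hs : Metric.IsSeparated ε (s : Set X))
    (hsF : (s : Set X) ⊆ ⋃₀ (F : Set (Set X))) (hF : ∀ U ∈ F, Metric.ediam U ≤ ε) :
    s.card ≤ F.card := by
  refine Finset.card_le_card_of_forall_subsingleton (· ∈ ·) (fun p hp ↦ by simpa using hsF hp)
    fun U hU p hp q hq ↦ ?_
  by_contra hpq
  exact (hs hp.1 hq.1 hpq).not_ge ((Metric.edist_le_ediam_of_mem hp.2 hq.2).trans (hF U hU))

lemma le_abs_natCast_mul_sub_natCast_mul {a b : ℕ} (hab : a ≠ b) {h : ℝ} (h0 : 0 ≤ h) :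
    h ≤ |(a : ℝ) * h - b * h| := by
  rw [← sub_mul, abs_mul, abs_of_nonneg h0]
  refine le_mul_of_one_le_left h0 ?_
  exact_mod_cast Int.one_le_abs (sub_ne_zero.2 (Nat.cast_injective.ne hab) : (a : ℤ) - b ≠ 0)

section FractalPlaques

variable {n : ℕ} {β : ℝ}

lemma fractalSpacing_pos (β : ℝ) (m : ℕ) : 0 < fractalSpacing β m := by
  unfold fractalSpacing; positivity

lemma rpow_neg_add_le_fractalSpacing {m t : ℕ} (ht : ⌊(m : ℝ) * β⌋₊ ≤ t) :
    (2 : ℝ) ^ (-((m : ℝ) + t)) ≤ fractalSpacing β m := by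
  have : ((⌊(m : ℝ) * β⌋ : ℤ) : ℝ) ≤ t := by
    exact_mod_cast (Int.self_le_toNat _).trans (by rw [Int.floor_toNat]; exact_mod_cast ht)
  exact Real.rpow_le_rpow_of_exponent_le one_le_two (by linarith)

noncomputable def plaqueGridPoint (β : ℝ) (m : ℕ) (h : ℝ) (ja : ℕ × (Fin n → ℕ)) :
    EuclideanSpace ℝ (Fin (n + 1)) :=
  WithLp.toLp 2 (Fin.cons (fractalPoint β m ja.1) fun i ↦ (ja.2 i : ℝ) * h)

@[simp]
lemma plaqueGridPoint_zero (m : ℕ) (h : ℝ) (ja : ℕ × (Fin n → ℕ)) :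
    plaqueGridPoint β m h ja 0 = fractalPoint β m ja.1 := rfl

@[simp]
lemma plaqueGridPoint_succ (m : ℕ) (h : ℝ) (ja : ℕ × (Fin n → ℕ)) (i : Fin n) :
    plaqueGridPoint β m h ja i.succ = ja.2 i * h := rfl

lemma plaqueGridPoint_mem_fractalPlaqueUnion {m : ℕ} (hm : 1 ≤ m) {h : ℝ} (h0 : 0 ≤ h)
    {ja : ℕ × (Fin n → ℕ)} (hj : ja.1 ∈ Finset.Icc 1 (2 ^ ⌊(m : ℝ) * β⌋.toNat))
    (ha : ∀ i, (ja.2 i : ℝ) * h ≤ 2 ^ (-(m : ℝ))) :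
    plaqueGridPoint β m h ja ∈ fractalPlaqueUnion n β := by
  rw [Finset.mem_Icc] at hj
  simp only [fractalPlaqueUnion, mem_iUnion]
  refine ⟨m, hm, ja.1, hj.1, hj.2, plaqueGridPoint_zero .., fun i hi ↦ ?_⟩
  obtain ⟨i, rfl⟩ := Fin.exists_succ_eq.2 hi
  exact ⟨by rw [plaqueGridPoint_succ]; positivity, ha i⟩

lemma fractalPlaqueUnion_nonempty (n : ℕ) (β : ℝ) : (fractalPlaqueUnion n β).Nonempty :=
  ⟨_, plaqueGridPoint_mem_fractalPlaqueUnion (ja := (1, 0)) le_rfl le_rfl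
    (Finset.mem_Icc.2 ⟨le_rfl, Nat.one_le_two_pow⟩) fun _ ↦ by simp; positivity⟩

lemma le_dist_plaqueGridPoint {m : ℕ} {h : ℝ} (h0 : 0 ≤ h) (hh : h ≤ fractalSpacing β m)
    {ja ja' : ℕ × (Fin n → ℕ)} (hne : ja ≠ ja') :
    h ≤ dist (plaqueGridPoint β m h ja) (plaqueGridPoint β m h ja') := by
  obtain ⟨j, a⟩ := ja
  obtain ⟨j', a'⟩ := ja'
  by_cases hj : j = j'
  · subst hj
    obtain ⟨i, hi⟩ := Function.ne_iff.1 fun ha : a = a' ↦ hne (by rw [ha])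
    calc h ≤ |(a i : ℝ) * h - a' i * h| := le_abs_natCast_mul_sub_natCast_mul hi h0
      _ ≤ _ := by
        simpa [Real.dist_eq] using PiLp.dist_apply_le (plaqueGridPoint β m h (j, a))
          (plaqueGridPoint β m h (j, a')) i.succ
  · calc h ≤ fractalSpacing β m := hh
      _ ≤ |(j : ℝ) * fractalSpacing β m - j' * fractalSpacing β m| :=
        le_abs_natCast_mul_sub_natCast_mul hj (fractalSpacing_pos β m).le
      _ ≤ _ := by
        simpa [Real.dist_eq, fractalPoint] using PiLp.dist_apply_le
          (plaqueGridPoint β m h (j, a)) (plaqueGridPoint β m h (j', a')) 0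

theorem two_pow_le_card_of_cover_fractalPlaqueUnion {m t : ℕ} (hm : 1 ≤ m)
    (hmt : ⌊(m : ℝ) * β⌋₊ ≤ t) {ε : ℝ≥0∞} (hε : ε < ENNReal.ofReal (2 ^ (-((m : ℝ) + t))))
    {F : Finset (Set (EuclideanSpace ℝ (Fin (n + 1))))}
    (hcov : fractalPlaqueUnion n β ⊆ ⋃₀ (F : Set (Set (EuclideanSpace ℝ (Fin (n + 1))))))
    (hF : ∀ U ∈ F, Metric.ediam U ≤ ε) :
    2 ^ (⌊(m : ℝ) * β⌋₊ + t * n) ≤ F.card := by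
  set h : ℝ := 2 ^ (-((m : ℝ) + t)) with h_def
  have h_pos : 0 < h := by positivity
  have hTh : ((2 ^ t : ℕ) : ℝ) * h = 2 ^ (-(m : ℝ)) := by
    rw [h_def, Nat.cast_pow, Nat.cast_ofNat, ← Real.rpow_natCast, ← Real.rpow_add two_pos]
    ring_nf
  set grid := Finset.Icc 1 (2 ^ ⌊(m : ℝ) * β⌋.toNat) ×ˢ
    Fintype.piFinset fun _ : Fin n ↦ Finset.range (2 ^ t)
  have hsep : ∀ ja ja' : ℕ × (Fin n → ℕ), ja ≠ ja' →
      h ≤ dist (plaqueGridPoint β m h ja) (plaqueGridPoint β m h ja') :=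
    fun _ _ ↦ le_dist_plaqueGridPoint h_pos.le (rpow_neg_add_le_fractalSpacing hmt)
  have hinj : Function.Injective (plaqueGridPoint β m h) := fun ja ja' heq ↦ by
    by_contra hne
    have := hsep ja ja' hne
    rw [heq, dist_self] at this
    exact h_pos.not_ge this
  calc 2 ^ (⌊(m : ℝ) * β⌋₊ + t * n) = (grid.image (plaqueGridPoint β m h)).card := by
        rw [Finset.card_image_of_injective _ hinj, Finset.card_product, Nat.card_Icc,
          Fintype.card_piFinset]
        simp [pow_add, pow_mul, Int.floor_toNat]
    _ ≤ F.card := by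
      refine Metric.IsSeparated.card_le_card_of_subset_sUnion ?_ ?_ hF
      · simp only [Finset.coe_image]
        rintro _ ⟨ja, -, rfl⟩ _ ⟨ja', -, rfl⟩ hne
        refine hε.trans_le ?_
        rw [edist_dist]
        exact ENNReal.ofReal_le_ofReal (hsep ja ja' fun heq ↦ hne (congrArg _ heq))
      · simp only [Finset.coe_image]
        rintro _ ⟨ja, hja, rfl⟩
        obtain ⟨hj, ha⟩ := Finset.mem_product.1 hja
        refine hcov (plaqueGridPoint_mem_fractalPlaqueUnion hm h_pos.le hj fun i ↦ ?_)
        rw [← hTh]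
        gcongr
        exact_mod_cast (Finset.mem_range.1 (Fintype.mem_piFinset.1 ha i)).le

lemma add_floor_mul_le {m K : ℕ} (hβ : 0 ≤ β) (hm : (m : ℝ) ≤ K / (β + 1)) :
    m + ⌊(m : ℝ) * β⌋₊ ≤ K := by
  rw [le_div_iff₀ (by positivity)] at hm
  have := Nat.floor_le (by positivity : 0 ≤ (m : ℝ) * β)
  exact_mod_cast (by linarith : (m : ℝ) + ⌊(m : ℝ) * β⌋₊ ≤ K)

lemma covering_exponent_nonpos {K : ℕ} (hβ : 0 ≤ β) (hK : (K : ℝ) / (β + 1) < 1) :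
    -((n + 1) * (β + 2)) + ((n : ℝ) + 1) * ((K + 1 : ℕ) : ℝ) * β / (β + 1) ≤ 0 := by
  rw [div_lt_one (by positivity)] at hK
  rw [neg_add_nonpos_iff, div_le_iff₀ (by positivity)]
  push_cast
  nlinarith [mul_nonneg (Nat.cast_nonneg n) hβ, mul_nonneg (mul_nonneg (Nat.cast_nonneg n) hβ) hβ]

/-- Since `β ≥ n`, the exponent `mβ + (K - m)n` does not decrease with `m`, so the lower bound
`K/(β+1) - 1 < m` suffices. -/
lemma covering_exponent_le {m K : ℕ} (hβ : (n : ℝ) ≤ β) (hmK : m ≤ K)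
    (hm : (K : ℝ) / (β + 1) < m + 1) :
    -((n + 1) * (β + 2)) + ((n : ℝ) + 1) * ((K + 1 : ℕ) : ℝ) * β / (β + 1) ≤
      ((⌊(m : ℝ) * β⌋₊ + (K - m) * n : ℕ) : ℝ) := by
  have hβ0 : 0 ≤ β := (Nat.cast_nonneg n).trans hβ
  rw [div_lt_iff₀ (by positivity)] at hm
  have hfloor := Nat.lt_floor_add_one ((m : ℝ) * β)
  rw [neg_add_le_iff_le_add, div_le_iff₀ (by positivity)]
  push_cast [Nat.cast_sub hmK]
  nlinarith [mul_nonneg (Nat.cast_nonneg n) hβ0, mul_le_mul_of_nonneg_left hm.le (sub_nonneg.2 hβ)]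

end FractalPlaques

theorem fractal_plaques_covering_lower_bound_general
    (n : ℕ) (β : ℝ) (hβ : (n : ℝ) ≤ β) :
    ∃ c : ℝ, 0 < c ∧
      ∀ k : ℕ, 1 ≤ k →
        ∀ F : Finset (Set (EuclideanSpace ℝ (Fin (n + 1)))),
          fractalPlaqueUnion n β ⊆
            ⋃₀ (F : Set (Set (EuclideanSpace ℝ (Fin (n + 1))))) →
          (∀ U ∈ F, EMetric.diam U ≤ ENNReal.ofReal ((2 : ℝ) ^ (-(k : ℝ)))) →
          c * (2 : ℝ) ^ (((n : ℝ) + 1) * (k : ℝ) * β / (β + 1)) ≤ (F.card : ℝ) := by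
  have hβ0 : 0 ≤ β := (Nat.cast_nonneg n).trans hβ
  refine ⟨2 ^ (-((n + 1) * (β + 2))), by positivity, fun k hk F hcov hF ↦ ?_⟩
  obtain ⟨K, rfl⟩ : ∃ K, k = K + 1 := ⟨k - 1, by omega⟩
  rw [← Real.rpow_add two_pos]
  set m := ⌊(K : ℝ) / (β + 1)⌋₊
  have hmK := add_floor_mul_le (m := m) (K := K) hβ0 (Nat.floor_le (by positivity))
  rcases Nat.eq_zero_or_pos m with hm0 | hm1
  · obtain ⟨p, hp⟩ := fractalPlaqueUnion_nonempty n β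
    obtain ⟨U, hU, -⟩ := hcov hp
    calc (2 : ℝ) ^ _ ≤ 1 := Real.rpow_le_one_of_one_le_of_nonpos one_le_two
          (covering_exponent_nonpos hβ0 (Nat.floor_eq_zero.1 hm0))
      _ ≤ F.card := by exact_mod_cast Finset.card_pos.2 ⟨U, hU⟩
  · have hε : ENNReal.ofReal (2 ^ (-((K + 1 : ℕ) : ℝ))) <
        ENNReal.ofReal (2 ^ (-((m : ℝ) + (K - m : ℕ)))) := by
      rw [ENNReal.ofReal_lt_ofReal_iff (by positivity), Nat.cast_sub (by omega)]
      exact Real.rpow_lt_rpow_of_exponent_lt one_lt_two (by push_cast; linarith)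
    calc (2 : ℝ) ^ _ ≤ 2 ^ ((⌊(m : ℝ) * β⌋₊ + (K - m) * n : ℕ) : ℝ) :=
          Real.rpow_le_rpow_of_exponent_le one_le_two
            (covering_exponent_le hβ (by omega) (Nat.lt_floor_add_one _))
      _ ≤ F.card := by
        rw [Real.rpow_natCast]
        exact_mod_cast two_pow_le_card_of_cover_fractalPlaqueUnion hm1 (by omega) hε hcov hF

/-- there is a constant `c > 0` such that for every `k ≥ 1`,
every (finite) cover of `A_β` by sets of diameter at most `2^{-k}` has at
least `c·2^{(n+1)kβ/(β+1)}` members. -/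
theorem fractal_plaques_covering_lower_bound
    (n : ℕ) (hn : 1 ≤ n) (β : ℝ) (hβ : (n : ℝ) ≤ β) :
    ∃ c : ℝ, 0 < c ∧
      ∀ k : ℕ, 1 ≤ k →
        ∀ F : Finset (Set (EuclideanSpace ℝ (Fin (n + 1)))),
          fractalPlaqueUnion n β ⊆
            ⋃₀ (F : Set (Set (EuclideanSpace ℝ (Fin (n + 1))))) →
          (∀ U ∈ F, EMetric.diam U ≤ ENNReal.ofReal ((2 : ℝ) ^ (-(k : ℝ)))) →
          c * (2 : ℝ) ^ (((n : ℝ) + 1) * (k : ℝ) * β / (β + 1)) ≤ (F.card : ℝ) :=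
  fractal_plaques_covering_lower_bound_general n β hβ
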